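/- arXiv:1804.06773 — 2 statements merged into one kernel-verified Lean document; each statement's English description precedes it below -/
import Mathlib

section
/- Let α, β ≥ 0. Then for all u and v on ℝ^{1+n} with û, v̂ ≥ 0 one has the Fourier majorizations Λ_−^{−β}(uv) ≾ Λ_−^{−α−β}(Λ_+^α u · Λ_+^α v) and Λ_−^{−β}(uv) ≾ Λ_−^{−α−β}(u · Λ^α v) + u · Λ^{−β} v. -/
open MeasureTheory Complex Real
open scoped ENNReal NNReal FourierTransform ComplexConjugate

noncomputable section

/-- Spacetime `ℝ^{1+n}`: coordinate `0` is time. -/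
abbrev SpT (n : ℕ) := EuclideanSpace ℝ (Fin (n + 1))
/-- Space `ℝⁿ`. -/
abbrev SpX (n : ℕ) := EuclideanSpace ℝ (Fin n)

variable {n : ℕ}

/-- Combine a time and a space point into a spacetime point. -/
def glue (t : ℝ) (x : SpX n) : SpT n :=
  (EuclideanSpace.equiv (Fin (n + 1)) ℝ).symm (Fin.cons t (EuclideanSpace.equiv (Fin n) ℝ x))

/-- Time component. -/
def tc (z : SpT n) : ℝ := z 0

/-- Spatial part. -/
def sc (z : SpT n) : SpX n := (EuclideanSpace.equiv (Fin n) ℝ).symm (fun i => z i.succ)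

/-- Spatial norm `|ξ|` of a spacetime frequency. -/
def sn (z : SpT n) : ℝ := ‖sc z‖

/-- Japanese bracket `⟨a⟩ = (1+a²)^{1/2}`. -/
def jb (a : ℝ) : ℝ := Real.sqrt (1 + a ^ 2)

/-- symbol `|τ|+|ξ|`. -/
def wp (z : SpT n) : ℝ := |tc z| + sn z
/-- symbol `|τ|-|ξ|`. -/
def wm (z : SpT n) : ℝ := |tc z| - sn z

/-- Partial derivative in direction `μ`. -/
def pd {E : Type*} [NormedAddCommGroup E] [NormedSpace ℝ E] (μ : Fin (n + 1))
    (u : SpT n → E) : SpT n → E :=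
  fun z => fderiv ℝ u z (EuclideanSpace.single μ 1)

/-- Spatial partial derivative of a function of the space variable. -/
def pdSp {E : Type*} [NormedAddCommGroup E] [NormedSpace ℝ E] (k : Fin n)
    (f : SpX n → E) : SpX n → E :=
  fun x => fderiv ℝ f x (EuclideanSpace.single k 1)

/-- The d'Alembertian `□ = ∂^μ∂_μ = -∂_t² + Δ`. -/
def box {E : Type*} [NormedAddCommGroup E] [NormedSpace ℝ E] (u : SpT n → E) : SpT n → E :=
  fun z => -(pd 0 (pd 0 u) z) + ∑ i : Fin n, pd i.succ (pd i.succ u) z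

/-- Null form `Q_{αβ}(u,v) = ∂_α u ∂_β v - ∂_β u ∂_α v`. -/
def nullQ (α β : Fin (n + 1)) (u v : SpT n → ℂ) : SpT n → ℂ :=
  fun z => pd α u z * pd β v z - pd β u z * pd α v z

/-- Weighted (Fourier side) spacetime `L²` norm. -/
def HWnorm (n : ℕ) (w : SpT n → ℝ) (u : SpT n → ℂ) : ℝ≥0∞ :=
  eLpNorm (fun ξ : SpT n => w ξ * ‖𝓕 u ξ‖) 2 volume

/-- Wave-Sobolev norm `‖u‖_{H^{s,b}}`. -/
def HsbNorm (n : ℕ) (s b : ℝ) (u : SpT n → ℂ) : ℝ≥0∞ :=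
  HWnorm n (fun ξ => jb (sn ξ) ^ s * jb (wm ξ) ^ b) u

/-- Homogeneous wave-Sobolev norm `‖u‖_{Ḣ^{s,b}}`. -/
def HdotsbNorm (n : ℕ) (s b : ℝ) (u : SpT n → ℂ) : ℝ≥0∞ :=
  HWnorm n (fun ξ => sn ξ ^ s * jb (wm ξ) ^ b) u

/-- Weighted (Fourier side) spatial `L²` norm. -/
def HWnormSp (n : ℕ) (w : SpX n → ℝ) (f : SpX n → ℂ) : ℝ≥0∞ :=
  eLpNorm (fun ξ : SpX n => w ξ * ‖𝓕 f ξ‖) 2 volume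

/-- Sobolev norm `‖f‖_{H^s(ℝⁿ)}`. -/
def HsSpNorm (n : ℕ) (s : ℝ) (f : SpX n → ℂ) : ℝ≥0∞ := HWnormSp n (fun ξ => jb ‖ξ‖ ^ s) f

/-- Homogeneous Sobolev norm `‖f‖_{Ḣ^s(ℝⁿ)}`. -/
def HdotSpNorm (n : ℕ) (s : ℝ) (f : SpX n → ℂ) : ℝ≥0∞ := HWnormSp n (fun ξ => ‖ξ‖ ^ s) f

/-- Mixed norm `‖u‖_{L^q_t L^r_x}`. -/
def mixedNorm (n : ℕ) (q r : ℝ≥0∞) (u : SpT n → ℂ) : ℝ≥0∞ :=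
  if q = ∞ then essSup (fun t : ℝ => eLpNorm (fun x : SpX n => u (glue t x)) r volume) volume
  else (∫⁻ t : ℝ, eLpNorm (fun x : SpX n => u (glue t x)) r volume ^ q.toReal) ^ (1 / q.toReal)

/-- dual exponent -/
def dualExp (q : ℝ≥0∞) : ℝ≥0∞ :=
  if q = 1 then ∞ else if q = ∞ then 1 else ENNReal.ofReal (q.toReal / (q.toReal - 1))

/-- `v` has a nonnegative Fourier transform. -/
def NonnegFT (n : ℕ) (v : SpT n → ℂ) : Prop :=
  ∀ ξ, (𝓕 v ξ).im = 0 ∧ 0 ≤ (𝓕 v ξ).re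

/-- the norm `‖ weight ⋅ u ‖_{𝓛^q_t 𝓛^r_x}` (Fourier side weight `w`). -/
def calNormW (n : ℕ) (q r : ℝ≥0∞) (w : SpT n → ℝ) (u : SpT n → ℂ) : ℝ≥0∞ :=
  ⨆ (v : SchwartzMap (SpT n) ℂ)
    (_ : NonnegFT n v ∧ mixedNorm n (dualExp q) (dualExp r) v = 1),
      ∫⁻ ξ : SpT n, ENNReal.ofReal (w ξ) * (‖𝓕 u ξ‖₊ : ℝ≥0∞) * (‖𝓕 (v : SpT n → ℂ) ξ‖₊ : ℝ≥0∞)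

/-- `‖u‖_{𝓛^q_t 𝓛^r_x}`. -/
def calNorm (n : ℕ) (q r : ℝ≥0∞) (u : SpT n → ℂ) : ℝ≥0∞ := calNormW n q r (fun _ => 1) u

/-- Spacetime Fourier multiplier. -/
def mult (n : ℕ) (m : SpT n → ℝ) (u : SpT n → ℂ) : SpT n → ℂ :=
  𝓕⁻ (fun ξ => (m ξ : ℂ) * 𝓕 u ξ)

/-- Spatial Fourier multiplier (acting for each fixed time). -/
def multSp (n : ℕ) (m : SpX n → ℝ) (u : SpT n → ℂ) : SpT n → ℂ :=
  fun z => 𝓕⁻ (fun ξ => (m ξ : ℂ) * 𝓕 (fun x : SpX n => u (glue (tc z) x)) ξ) (sc z)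

/-- `D^α`, the spatial multiplier with symbol `|ξ|^α` (in the `2π`-normalization matching
`∂_k ↔ 2πiξ_k` of the Mathlib Fourier transform). -/
def Dop (n : ℕ) (α : ℝ) (u : SpT n → ℂ) : SpT n → ℂ :=
  multSp n (fun ξ => (2 * π * ‖ξ‖) ^ α) u

/-- Riesz transform `R_k = D^{-1}∂_k`. -/
def Riesz (n : ℕ) (k : Fin n) (u : SpT n → ℂ) : SpT n → ℂ := Dop n (-1) (pd k.succ u)

/-- `D_+`, spacetime multiplier with symbol `|τ|+|ξ|`. -/
def Dplus (n : ℕ) (u : SpT n → ℂ) : SpT n → ℂ := mult n wp u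

/-- The norm of the space `G^s` : `‖Λ_+ v‖_{H^{s-1,1/2+ε}}`. -/
def Gnorm (n : ℕ) (s ε : ℝ) (u : SpT n → ℂ) : ℝ≥0∞ :=
  HWnorm n (fun ξ => jb (wp ξ) * jb (sn ξ) ^ (s - 1) * jb (wm ξ) ^ (1 / 2 + ε)) u

/-- The norm of the space `F^{r-1}`. -/
def Fnorm (n : ℕ) (r ε : ℝ) (u : SpT n → ℂ) : ℝ≥0∞ :=
  HWnorm n (fun ξ => jb (wp ξ) * jb (sn ξ) ^ (r - 2) * jb (wm ξ) ^ (1 / 2 + ε)) u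
  + calNormW n 1 ∞
      (fun ξ => jb (wp ξ) ^ (1 / 2 + 2 * ε) * jb (sn ξ) ^ (-2 + 3 * ε) * jb (wm ξ) ^ (1 / 2 : ℝ)) u

/-- Two spacetime functions agree on the slab `[0,T] × ℝⁿ`. -/
def AgreeOn (T : ℝ) (u v : SpT n → ℂ) : Prop :=
  ∀ t ∈ Set.Icc (0 : ℝ) T, ∀ x : SpX n, u (glue t x) = v (glue t x)

/-- Restriction norm of `H^{s,b}[0,T]`. -/
def HsbNormT (n : ℕ) (s b T : ℝ) (u : SpT n → ℂ) : ℝ≥0∞ :=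
  ⨅ (U : SpT n → ℂ) (_ : AgreeOn T U u), HsbNorm n s b U

/-- Restriction norm of `G^s_T`. -/
def GnormT (n : ℕ) (s ε T : ℝ) (u : SpT n → ℂ) : ℝ≥0∞ :=
  ⨅ (U : SpT n → ℂ) (_ : AgreeOn T U u), Gnorm n s ε U

/-- Restriction norm of `F^{r-1}_T`. -/
def FnormT (n : ℕ) (r ε T : ℝ) (u : SpT n → ℂ) : ℝ≥0∞ :=
  ⨅ (U : SpT n → ℂ) (_ : AgreeOn T U u), Fnorm n r ε U

/-- membership in `H^{s,b}[0,T]`. -/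
def MemHsbT (n : ℕ) (s b T : ℝ) (u : SpT n → ℂ) : Prop :=
  ∃ U : SpT n → ℂ, AgreeOn T U u ∧ HsbNorm n s b U < ∞

/-- membership in `F^{r-1}_T`. -/
def MemFT (n : ℕ) (r ε T : ℝ) (u : SpT n → ℂ) : Prop :=
  ∃ U : SpT n → ℂ, AgreeOn T U u ∧ Fnorm n r ε U < ∞

/-- coerce a real valued function to a complex valued one -/
def toC {α : Type*} (f : α → ℝ) : α → ℂ := fun x => (f x : ℂ)


/-- The weighted convolution `∫ w₁(η)|û(η)| w₂(ζ-η)|v̂(ζ-η)| dη`, i.e. the Fourier transform at `ζ`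
of the product of the functions with Fourier transforms `w₁|û|` and `w₂|v̂|`. -/
def convW (n : ℕ) (w₁ w₂ : SpT n → ℝ) (u v : SpT n → ℂ) (ζ : SpT n) : ℝ≥0∞ :=
  ∫⁻ η : SpT n, ENNReal.ofReal (w₁ η) * (‖𝓕 u η‖₊ : ℝ≥0∞)
    * ENNReal.ofReal (w₂ (ζ - η)) * (‖𝓕 v (ζ - η)‖₊ : ℝ≥0∞)

/-! Both majorizations hold pointwise in the convolution variable `η`, with `ξ = ζ - η`.
Since `|wm| ≤ wp` and `wp` is subadditive, `⟨wm ζ⟩ ≤ 2⟨wp η⟩⟨wp ξ⟩`, and trading `⟨wm ζ⟩^α`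
for this bound gives the first. For the second compare `⟨wm ζ⟩` with `⟨sn ξ⟩`: if it is smaller,
trade `⟨wm ζ⟩^α` for `⟨sn ξ⟩^α`; otherwise `⟨wm ζ⟩^{-β} ≤ ⟨sn ξ⟩^{-β}`. -/

lemma one_le_jb (a : ℝ) : 1 ≤ jb a :=
  Real.one_le_sqrt.mpr (le_add_of_nonneg_right (sq_nonneg a))

lemma jb_pos (a : ℝ) : 0 < jb a := one_pos.trans_le (one_le_jb a)

lemma jb_le_jb_of_abs_le {a b : ℝ} (h : |a| ≤ |b|) : jb a ≤ jb b :=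
  Real.sqrt_le_sqrt (by simpa only [add_le_add_iff_left, sq_le_sq] using h)

lemma jb_add_le (a b : ℝ) : jb (a + b) ≤ 2 * jb a * jb b := by
  have hprod : 2 * jb a * jb b = Real.sqrt (4 * ((1 + a ^ 2) * (1 + b ^ 2))) := by
    rw [Real.sqrt_mul (by norm_num), Real.sqrt_mul (by positivity),
      show Real.sqrt 4 = 2 by rw [show (4 : ℝ) = 2 ^ 2 by norm_num, Real.sqrt_sq zero_le_two],
      jb, jb, mul_assoc]
  rw [hprod, jb]
  exact Real.sqrt_le_sqrt (by nlinarith [sq_nonneg (a - b), sq_nonneg (a * b)])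

@[fun_prop]
lemma continuous_jb : Continuous jb := by
  unfold jb; fun_prop

@[fun_prop]
lemma continuous_sc : Continuous (sc : SpT n → SpX n) := by
  unfold sc; fun_prop

@[fun_prop]
lemma continuous_sn : Continuous (sn : SpT n → ℝ) := continuous_sc.norm

lemma jb_rpow_nonneg (a s : ℝ) : 0 ≤ jb a ^ s := Real.rpow_nonneg (jb_pos a).le s

lemma wp_nonneg (ζ : SpT n) : 0 ≤ wp ζ := add_nonneg (abs_nonneg _) (norm_nonneg _)

lemma abs_wm_le_wp (ζ : SpT n) : |wm ζ| ≤ wp ζ :=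
  abs_sub_le_of_nonneg_of_le (abs_nonneg _) (le_add_of_nonneg_right (norm_nonneg _))
    (norm_nonneg _) (le_add_of_nonneg_left (abs_nonneg _))

lemma wp_add_le (η ξ : SpT n) : wp (η + ξ) ≤ wp η + wp ξ := by
  have ht : |tc (η + ξ)| ≤ |tc η| + |tc ξ| := abs_add_le (tc η) (tc ξ)
  have hs : sn (η + ξ) ≤ sn η + sn ξ := norm_add_le (sc η) (sc ξ)
  simp only [wp]
  linarith

lemma jb_wm_add_le (η ξ : SpT n) : jb (wm (η + ξ)) ≤ 2 * jb (wp η) * jb (wp ξ) := by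
  calc jb (wm (η + ξ)) ≤ jb (wp (η + ξ)) := jb_le_jb_of_abs_le <| by
        rw [abs_of_nonneg (wp_nonneg _)]; exact abs_wm_le_wp _
    _ ≤ jb (wp η + wp ξ) := jb_le_jb_of_abs_le <| by
        rw [abs_of_nonneg (wp_nonneg _), abs_of_nonneg (add_nonneg (wp_nonneg _) (wp_nonneg _))]
        exact wp_add_le η ξ
    _ ≤ 2 * jb (wp η) * jb (wp ξ) := jb_add_le _ _

lemma rpow_neg_le_rpow_sub_mul_rpow {x y α : ℝ} (β : ℝ) (hx : 0 < x) (hxy : x ≤ y)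
    (hα : 0 ≤ α) : x ^ (-β) ≤ x ^ (-α - β) * y ^ α :=
  calc x ^ (-β) = x ^ (-α - β) * x ^ α := by rw [← Real.rpow_add hx]; ring_nf
    _ ≤ x ^ (-α - β) * y ^ α := by gcongr

lemma rpow_neg_le_add {x y α β : ℝ} (hx : 0 < x) (hy : 0 < y) (hα : 0 ≤ α) (hβ : 0 ≤ β) :
    x ^ (-β) ≤ x ^ (-α - β) * y ^ α + y ^ (-β) := by
  rcases le_total x y with hxy | hyx
  · exact (rpow_neg_le_rpow_sub_mul_rpow β hx hxy hα).trans (le_add_of_nonneg_right (by positivity))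
  · exact (Real.rpow_le_rpow_of_nonpos hy hyx (neg_nonpos.mpr hβ)).trans
      (le_add_of_nonneg_left (by positivity))

section convW

variable {w₁ w₂ w₁' w₂' : SpT n → ℝ} {u v : SpT n → ℂ} {ζ : SpT n}

lemma ofReal_mul_convW {c : ℝ} (hc : 0 ≤ c) :
    ENNReal.ofReal c * convW n w₁ w₂ u v ζ = convW n w₁ (fun ξ => c * w₂ ξ) u v ζ := by
  rw [convW, ← lintegral_const_mul' _ _ ENNReal.ofReal_ne_top]
  refine lintegral_congr fun η => ?_
  rw [ENNReal.ofReal_mul hc]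
  ring

lemma convW_mono (hw₁ : ∀ η, 0 ≤ w₁ η) (hw₁' : ∀ η, 0 ≤ w₁' η)
    (h : ∀ η, w₁ η * w₂ (ζ - η) ≤ w₁' η * w₂' (ζ - η)) :
    convW n w₁ w₂ u v ζ ≤ convW n w₁' w₂' u v ζ := by
  refine lintegral_mono fun η => ?_
  have key := ENNReal.ofReal_le_ofReal (h η)
  rw [ENNReal.ofReal_mul (hw₁ η), ENNReal.ofReal_mul (hw₁' η)] at key
  calc _ = ENNReal.ofReal (w₁ η) * ENNReal.ofReal (w₂ (ζ - η))
          * ((‖𝓕 u η‖₊ : ℝ≥0∞) * ‖𝓕 v (ζ - η)‖₊) := by ring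
    _ ≤ ENNReal.ofReal (w₁' η) * ENNReal.ofReal (w₂' (ζ - η))
          * ((‖𝓕 u η‖₊ : ℝ≥0∞) * ‖𝓕 v (ζ - η)‖₊) := by gcongr
    _ = _ := by ring

lemma convW_add (hu : Measurable (𝓕 u)) (hv : Measurable (𝓕 v)) (hw₁ : Measurable w₁)
    (hw₂ : Measurable w₂) (hw₂₀ : ∀ ξ, 0 ≤ w₂ ξ) (hw₂₀' : ∀ ξ, 0 ≤ w₂' ξ) :
    convW n w₁ w₂ u v ζ + convW n w₁ w₂' u v ζ = convW n w₁ (fun ξ => w₂ ξ + w₂' ξ) u v ζ := by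
  have hsub : Measurable fun η : SpT n => ζ - η := measurable_const.sub measurable_id
  rw [convW, convW, convW, ← lintegral_add_left (by fun_prop)]
  refine lintegral_congr fun η => ?_
  rw [ENNReal.ofReal_add (hw₂₀ _) (hw₂₀' _)]
  ring

end convW

lemma SchwartzMap.continuous_fourier_coe {V E : Type*} [NormedAddCommGroup V]
    [InnerProductSpace ℝ V] [FiniteDimensional ℝ V] [MeasurableSpace V] [BorelSpace V]
    [NormedAddCommGroup E] [NormedSpace ℂ E] (u : SchwartzMap V E) : Continuous (𝓕 (u : V → E)) :=
  (𝓕 u).continuous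

section majorization

variable {α β : ℝ} (u v : SpT n → ℂ) (ζ : SpT n)

lemma lambda_minus_majorization_wp (hα : 0 ≤ α) :
    ENNReal.ofReal (jb (wm ζ) ^ (-β)) * convW n (fun _ => 1) (fun _ => 1) u v ζ
      ≤ ENNReal.ofReal (2 ^ α) * (ENNReal.ofReal (jb (wm ζ) ^ (-α - β))
          * convW n (fun η => jb (wp η) ^ α) (fun η => jb (wp η) ^ α) u v ζ) := by
  rw [ofReal_mul_convW (jb_rpow_nonneg _ _), ofReal_mul_convW (jb_rpow_nonneg _ _),
    ofReal_mul_convW (by positivity)]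
  refine convW_mono (fun _ => zero_le_one) (fun _ => jb_rpow_nonneg _ _) fun η => ?_
  have hwm : jb (wm ζ) ≤ 2 * jb (wp η) * jb (wp (ζ - η)) := by
    simpa using jb_wm_add_le η (ζ - η)
  calc 1 * (jb (wm ζ) ^ (-β) * 1)
      ≤ jb (wm ζ) ^ (-α - β) * (2 * jb (wp η) * jb (wp (ζ - η))) ^ α := by
        simpa using rpow_neg_le_rpow_sub_mul_rpow β (jb_pos _) hwm hα
    _ = _ := by
        rw [Real.mul_rpow (mul_pos two_pos (jb_pos _)).le (jb_pos _).le,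
          Real.mul_rpow zero_le_two (jb_pos _).le]
        ring

lemma lambda_minus_majorization_sn (hu : Measurable (𝓕 u)) (hv : Measurable (𝓕 v))
    (hα : 0 ≤ α) (hβ : 0 ≤ β) :
    ENNReal.ofReal (jb (wm ζ) ^ (-β)) * convW n (fun _ => 1) (fun _ => 1) u v ζ
      ≤ ENNReal.ofReal (2 ^ α) * (ENNReal.ofReal (jb (wm ζ) ^ (-α - β))
            * convW n (fun _ => 1) (fun η => jb (sn η) ^ α) u v ζ
          + convW n (fun _ => 1) (fun η => jb (sn η) ^ (-β)) u v ζ) := by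
  have hC : (0 : ℝ) ≤ 2 ^ α := by positivity
  have hs : ∀ s : ℝ, 0 ≤ jb (wm ζ) ^ s := fun s => jb_rpow_nonneg _ s
  have hs' : ∀ s : ℝ, ∀ ξ : SpT n, 0 ≤ jb (sn ξ) ^ s := fun s ξ => jb_rpow_nonneg _ s
  rw [mul_add, ofReal_mul_convW (hs _), ofReal_mul_convW (hs _), ofReal_mul_convW hC,
    ofReal_mul_convW hC, convW_add hu hv (by fun_prop) (by fun_prop)
      (fun ξ => mul_nonneg hC (mul_nonneg (hs _) (hs' _ ξ))) (fun ξ => mul_nonneg hC (hs' _ ξ))]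
  refine convW_mono (fun _ => zero_le_one) (fun _ => zero_le_one) fun η => ?_
  calc 1 * (jb (wm ζ) ^ (-β) * 1)
      ≤ jb (wm ζ) ^ (-α - β) * jb (sn (ζ - η)) ^ α + jb (sn (ζ - η)) ^ (-β) := by
        simpa using rpow_neg_le_add (jb_pos (wm ζ)) (jb_pos (sn (ζ - η))) hα hβ
    _ ≤ 2 ^ α * (jb (wm ζ) ^ (-α - β) * jb (sn (ζ - η)) ^ α + jb (sn (ζ - η)) ^ (-β)) :=
        le_mul_of_one_le_left (add_nonneg (mul_nonneg (hs _) (hs' _ _)) (hs' _ _))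
          (Real.one_le_rpow one_le_two hα)
    _ = _ := by ring

end majorization

/-- Lemma 4.1 (Klainerman-Selberg, Lemma 8.10): for `α, β ≥ 0` and `û, v̂ ≥ 0`,
`Λ_-^{-β}(uv) ≾ Λ_-^{-α-β}(Λ_+^α u Λ_+^α v)` and
`Λ_-^{-β}(uv) ≾ Λ_-^{-α-β}(u Λ^α v) + u Λ^{-β} v`. -/
theorem lambda_minus_majorization (n : ℕ) (α β : ℝ) (hα : 0 ≤ α) (hβ : 0 ≤ β) :
    ∃ C : ℝ≥0, 0 < C ∧ ∀ u v : SchwartzMap (SpT n) ℂ,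
      NonnegFT n ⇑u → NonnegFT n ⇑v → ∀ ζ : SpT n,
      ENNReal.ofReal (jb (wm ζ) ^ (-β)) * convW n (fun _ => 1) (fun _ => 1) ⇑u ⇑v ζ
          ≤ C * (ENNReal.ofReal (jb (wm ζ) ^ (-α - β))
              * convW n (fun η => jb (wp η) ^ α) (fun η => jb (wp η) ^ α) ⇑u ⇑v ζ)
      ∧ ENNReal.ofReal (jb (wm ζ) ^ (-β)) * convW n (fun _ => 1) (fun _ => 1) ⇑u ⇑v ζ
          ≤ C * (ENNReal.ofReal (jb (wm ζ) ^ (-α - β))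
                * convW n (fun _ => 1) (fun η => jb (sn η) ^ α) ⇑u ⇑v ζ
              + convW n (fun _ => 1) (fun η => jb (sn η) ^ (-β)) ⇑u ⇑v ζ) := by
  refine ⟨((2 : ℝ) ^ α).toNNReal, by positivity, fun u v _ _ ζ => ?_⟩
  have hC : (((2 : ℝ) ^ α).toNNReal : ℝ≥0∞) = ENNReal.ofReal (2 ^ α) := rfl
  rw [hC]
  exact ⟨lambda_minus_majorization_wp u v ζ hα,
    lambda_minus_majorization_sn u v ζ u.continuous_fourier_coe.measurable
      v.continuous_fourier_coe.measurable hα hβ⟩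

end
end

section
/- Let A_ν : ℝ^{1+n} → ℝ (ν = 0,…,n) and φ : ℝ^{1+n} → ℂ be smooth, set F_{μν} := ∂_μ A_ν − ∂_ν A_μ and j_μ := Im(φ \overline{∂_μ φ}) + |φ|² A_μ, and assume Maxwell's equations ∂^ν F_{μν} = j_μ hold. Then the electromagnetic field components satisfy the wave equations □F_{k0} = Im Q_{0k}(φ, \overline{φ}) + ∂_t(A_k|φ|²) − ∂_k(A₀|φ|²) and □F_{kl} = Im Q_{lk}(φ, \overline{φ}) + ∂_l(A_k|φ|²) − ∂_k(A_l|φ|²) for all k, l ∈ {1,…,n}, where □ = ∂^μ∂_μ = −∂_t² + Δ. -/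
open MeasureTheory Complex Real
open scoped ENNReal NNReal FourierTransform ComplexConjugate

noncomputable section

variable {n : ℕ}

/-!
Applying `∂^λ` to the Bianchi identity `∂_λ F_{μν} = ∂_ν F_{μλ} - ∂_μ F_{νλ}` gives
`□F_{μν} = ∂_ν ∂^λ F_{μλ} - ∂_μ ∂^λ F_{νλ}`, which Maxwell's equations turn into
`∂_ν j_μ - ∂_μ j_ν`. Differentiating `Im(φ ∂_μφ̄)`, the terms `Im(φ ∂_ν∂_μφ̄)` cancel by the
symmetry of second derivatives, and what is left is `Im Q_{νμ}(φ, φ̄)`.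
-/

def fieldStrength (A : Fin (n + 1) → SpT n → ℝ) (μ ν : Fin (n + 1)) : SpT n → ℝ :=
  fun z => pd μ (A ν) z - pd ν (A μ) z

/-- `∂^λ G_λ`, the index raised with the Minkowski metric. -/
def minkDiv {E : Type*} [NormedAddCommGroup E] [NormedSpace ℝ E]
    (G : Fin (n + 1) → SpT n → E) : SpT n → E :=
  fun z => -pd 0 (G 0) z + ∑ k : Fin n, pd k.succ (G k.succ) z

def current (φ : SpT n → ℂ) (A : Fin (n + 1) → SpT n → ℝ) (μ : Fin (n + 1)) : SpT n → ℝ :=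
  fun z => (φ z * conj (pd μ φ z)).im + ‖φ z‖ ^ 2 * A μ z

section Calculus

variable {E G : Type*} [NormedAddCommGroup E] [NormedSpace ℝ E]
  [NormedAddCommGroup G] [NormedSpace ℝ G]

theorem ContDiff.pd {k m : WithTop ℕ∞} {f : SpT n → E} (hf : ContDiff ℝ m f)
    (hkm : k + 1 ≤ m) (μ : Fin (n + 1)) : ContDiff ℝ k (pd μ f) :=
  (ContinuousLinearMap.apply ℝ E (EuclideanSpace.single μ (1 : ℝ))).contDiff.comp
    (hf.fderiv_right hkm)

theorem ContDiffAt.differentiableAt_pd {f : SpT n → E} {z : SpT n} (hf : ContDiffAt ℝ 2 f z)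
    (μ : Fin (n + 1)) : DifferentiableAt ℝ (pd μ f) z :=
  (ContinuousLinearMap.apply ℝ E (EuclideanSpace.single μ (1 : ℝ))).differentiableAt.comp z
    ((hf.fderiv_right (m := 1) le_rfl).differentiableAt one_ne_zero)

theorem pd_add {f g : SpT n → E} {z : SpT n} (hf : DifferentiableAt ℝ f z)
    (hg : DifferentiableAt ℝ g z) (μ : Fin (n + 1)) :
    pd μ (fun w => f w + g w) z = pd μ f z + pd μ g z := by
  simp [pd, fderiv_fun_add hf hg]

theorem pd_sub {f g : SpT n → E} {z : SpT n} (hf : DifferentiableAt ℝ f z)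
    (hg : DifferentiableAt ℝ g z) (μ : Fin (n + 1)) :
    pd μ (fun w => f w - g w) z = pd μ f z - pd μ g z := by
  simp [pd, fderiv_fun_sub hf hg]

theorem pd_neg (f : SpT n → E) (z : SpT n) (μ : Fin (n + 1)) :
    pd μ (fun w => -f w) z = -pd μ f z := by
  simp [pd]

theorem pd_sum {ι : Type*} {s : Finset ι} {f : ι → SpT n → E} {z : SpT n}
    (hf : ∀ i ∈ s, DifferentiableAt ℝ (f i) z) (μ : Fin (n + 1)) :
    pd μ (fun w => ∑ i ∈ s, f i w) z = ∑ i ∈ s, pd μ (f i) z := by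
  simp [pd, fderiv_fun_sum hf]

theorem pd_mul {𝔸 : Type*} [NormedCommRing 𝔸] [NormedAlgebra ℝ 𝔸] {f g : SpT n → 𝔸}
    {z : SpT n} (hf : DifferentiableAt ℝ f z) (hg : DifferentiableAt ℝ g z) (μ : Fin (n + 1)) :
    pd μ (fun w => f w * g w) z = pd μ f z * g z + f z * pd μ g z := by
  simp [pd, fderiv_fun_mul hf hg]
  ring

theorem pd_clm_comp (L : E →L[ℝ] G) {f : SpT n → E} {z : SpT n}
    (hf : DifferentiableAt ℝ f z) (μ : Fin (n + 1)) :
    pd μ (fun w => L (f w)) z = L (pd μ f z) := by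
  change fderiv ℝ (L ∘ f) z _ = _
  rw [fderiv_comp z L.differentiableAt hf, L.fderiv]
  rfl

theorem pd_conj {f : SpT n → ℂ} {z : SpT n} (hf : DifferentiableAt ℝ f z) (μ : Fin (n + 1)) :
    pd μ (fun w => conj (f w)) z = conj (pd μ f z) :=
  pd_clm_comp Complex.conjCLE.toContinuousLinearMap hf μ

theorem pd_im {f : SpT n → ℂ} {z : SpT n} (hf : DifferentiableAt ℝ f z) (μ : Fin (n + 1)) :
    pd μ (fun w => (f w).im) z = (pd μ f z).im :=
  pd_clm_comp Complex.imCLM hf μ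

theorem pd_comm {f : SpT n → E} {z : SpT n} (hf : ContDiffAt ℝ 2 f z) (μ ν : Fin (n + 1)) :
    pd μ (pd ν f) z = pd ν (pd μ f) z := by
  have hsymm : IsSymmSndFDerivAt ℝ f z :=
    hf.isSymmSndFDerivAt (by simp [minSmoothness_of_isRCLikeNormedField])
  have hd : DifferentiableAt ℝ (fderiv ℝ f) z :=
    (hf.fderiv_right (m := 1) le_rfl).differentiableAt one_ne_zero
  have second : ∀ a b : Fin (n + 1), pd a (pd b f) z
      = fderiv ℝ (fderiv ℝ f) z (EuclideanSpace.single a 1) (EuclideanSpace.single b 1) :=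
    fun a b => pd_clm_comp (ContinuousLinearMap.apply ℝ E (EuclideanSpace.single b 1)) hd a
  rw [second, second, hsymm.eq]

end Calculus

section Electromagnetism

variable {A : Fin (n + 1) → SpT n → ℝ} {φ : SpT n → ℂ}

/-- The Bianchi identity. -/
theorem pd_fieldStrength {z : SpT n} (hA : ∀ ν, ContDiffAt ℝ 2 (A ν) z) (l μ ν : Fin (n + 1)) :
    pd l (fieldStrength A μ ν) z
      = pd ν (fieldStrength A μ l) z - pd μ (fieldStrength A ν l) z := by
  have hd : ∀ a b, DifferentiableAt ℝ (pd a (A b)) z := fun a b => (hA b).differentiableAt_pd a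
  unfold fieldStrength
  rw [pd_sub (hd μ ν) (hd ν μ), pd_sub (hd μ l) (hd l μ), pd_sub (hd ν l) (hd l ν),
    pd_comm (hA l) ν μ, pd_comm (hA μ) ν l, pd_comm (hA ν) μ l]
  abel

section Divergence

variable {E : Type*} [NormedAddCommGroup E] [NormedSpace ℝ E]

theorem minkDiv_sub {G H : Fin (n + 1) → SpT n → E} {z : SpT n}
    (hG : ∀ l, DifferentiableAt ℝ (G l) z) (hH : ∀ l, DifferentiableAt ℝ (H l) z) :
    minkDiv (fun l w => G l w - H l w) z = minkDiv G z - minkDiv H z := by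
  simp only [minkDiv, pd_sub (hG _) (hH _), Finset.sum_sub_distrib]
  abel

theorem pd_minkDiv {G : Fin (n + 1) → SpT n → E} {z : SpT n}
    (hG : ∀ l, ContDiffAt ℝ 2 (G l) z) (ν : Fin (n + 1)) :
    pd ν (minkDiv G) z = minkDiv (fun l => pd ν (G l)) z := by
  have hd : ∀ l, DifferentiableAt ℝ (pd l (G l)) z := fun l => (hG l).differentiableAt_pd l
  have hneg : DifferentiableAt ℝ (fun w => -pd 0 (G 0) w) z := (hd 0).neg
  have hsum : DifferentiableAt ℝ (fun w => ∑ k : Fin n, pd k.succ (G k.succ) w) z :=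
    DifferentiableAt.fun_sum fun k _ => hd k.succ
  unfold minkDiv
  rw [pd_add hneg hsum, pd_neg, pd_sum fun k _ => hd k.succ, pd_comm (hG 0)]
  congr 1
  exact Finset.sum_congr rfl fun k _ => pd_comm (hG k.succ) ν k.succ

end Divergence

theorem box_fieldStrength (hA : ∀ ν, ContDiff ℝ 3 (A ν)) (μ ν : Fin (n + 1)) (z : SpT n) :
    box (fieldStrength A μ ν) z
      = pd ν (minkDiv (fieldStrength A μ)) z - pd μ (minkDiv (fieldStrength A ν)) z := by
  have hF : ∀ a b, ContDiff ℝ 2 (fieldStrength A a b) := fun a b =>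
    ((hA b).pd (by norm_num) a).sub ((hA a).pd (by norm_num) b)
  have bianchi : ∀ l, pd l (fieldStrength A μ ν)
      = fun w => pd ν (fieldStrength A μ l) w - pd μ (fieldStrength A ν l) w := fun l =>
    funext fun w => pd_fieldStrength (fun b => ((hA b).of_le (by norm_num)).contDiffAt) l μ ν
  calc box (fieldStrength A μ ν) z
      = minkDiv (fun l => pd l (fieldStrength A μ ν)) z := rfl
    _ = minkDiv (fun l => pd ν (fieldStrength A μ l)) z
          - minkDiv (fun l => pd μ (fieldStrength A ν l)) z := by
      simp only [bianchi]
      exact minkDiv_sub (fun l => (hF μ l).contDiffAt.differentiableAt_pd ν)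
        (fun l => (hF ν l).contDiffAt.differentiableAt_pd μ)
    _ = _ := by
      rw [pd_minkDiv (fun l => (hF μ l).contDiffAt), pd_minkDiv (fun l => (hF ν l).contDiffAt)]

theorem nullQ_conj {z : SpT n} (hφ : DifferentiableAt ℝ φ z) (α β : Fin (n + 1)) :
    nullQ α β φ (fun w => conj (φ w)) z
      = pd α φ z * conj (pd β φ z) - pd β φ z * conj (pd α φ z) := by
  rw [nullQ, pd_conj hφ, pd_conj hφ]

theorem pd_current {z : SpT n} {μ : Fin (n + 1)} (hφ : ContDiffAt ℝ 2 φ z)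
    (hA : DifferentiableAt ℝ (A μ) z) (ν : Fin (n + 1)) :
    pd ν (current φ A μ) z
      = (pd ν φ z * conj (pd μ φ z) + φ z * conj (pd ν (pd μ φ) z)).im
          + pd ν (fun w => A μ w * ‖φ w‖ ^ 2) z := by
  have hφ1 : DifferentiableAt ℝ φ z := hφ.differentiableAt (by norm_num)
  have hconj : DifferentiableAt ℝ (fun w => conj (pd μ φ w)) z :=
    Complex.conjCLE.differentiableAt.comp z (hφ.differentiableAt_pd μ)
  have hprod : DifferentiableAt ℝ (fun w => φ w * conj (pd μ φ w)) z := hφ1.mul hconj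
  have him : DifferentiableAt ℝ (fun w => (φ w * conj (pd μ φ w)).im) z :=
    Complex.imCLM.differentiableAt.comp z hprod
  have hAφ : DifferentiableAt ℝ (fun w => A μ w * ‖φ w‖ ^ 2) z :=
    hA.mul ((hφ.norm_sq ℝ).differentiableAt (by norm_num))
  have hcurrent : current φ A μ
      = fun w => (φ w * conj (pd μ φ w)).im + A μ w * ‖φ w‖ ^ 2 :=
    funext fun w => by rw [current, mul_comm (‖φ w‖ ^ 2)]
  rw [hcurrent, pd_add him hAφ, pd_im hprod, pd_mul hφ1 hconj, pd_conj (hφ.differentiableAt_pd μ)]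

theorem pd_current_sub_pd_current {z : SpT n} (hφ : ContDiffAt ℝ 2 φ z)
    (hA : ∀ ν, DifferentiableAt ℝ (A ν) z) (μ ν : Fin (n + 1)) :
    pd ν (current φ A μ) z - pd μ (current φ A ν) z
      = (nullQ ν μ φ (fun w => conj (φ w)) z).im
          + pd ν (fun w => A μ w * ‖φ w‖ ^ 2) z - pd μ (fun w => A ν w * ‖φ w‖ ^ 2) z := by
  rw [pd_current hφ (hA μ), pd_current hφ (hA ν), nullQ_conj (hφ.differentiableAt (by norm_num)),
    pd_comm hφ ν μ]
  simp only [Complex.add_im, Complex.sub_im]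
  ring

theorem box_fieldStrength_of_maxwell (hA : ∀ ν, ContDiff ℝ 3 (A ν)) (hφ : ContDiff ℝ 2 φ)
    (hMaxwell : ∀ μ, minkDiv (fieldStrength A μ) = current φ A μ) (μ ν : Fin (n + 1))
    (z : SpT n) :
    box (fieldStrength A μ ν) z
      = (nullQ ν μ φ (fun w => conj (φ w)) z).im
          + pd ν (fun w => A μ w * ‖φ w‖ ^ 2) z - pd μ (fun w => A ν w * ‖φ w‖ ^ 2) z := by
  rw [box_fieldStrength hA, hMaxwell, hMaxwell, pd_current_sub_pd_current hφ.contDiffAt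
    fun ν => (hA ν).differentiable (by norm_num) z]

end Electromagnetism

/-- Null structure in the Maxwell part: if `∂^ν F_{μν} = j_μ` then
`□F_{k0} = Im Q_{0k}(φ,φ̄) + ∂_t(A_k|φ|²) - ∂_k(A₀|φ|²)` and
`□F_{kl} = Im Q_{lk}(φ,φ̄) + ∂_l(A_k|φ|²) - ∂_k(A_l|φ|²)`. -/
theorem maxwell_null_structure (n : ℕ)
    (A : Fin (n + 1) → SpT n → ℝ) (φ : SpT n → ℂ)
    (hA : ∀ ν, ContDiff ℝ (⊤ : ℕ∞) (A ν)) (hφ : ContDiff ℝ (⊤ : ℕ∞) φ)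
    (F : Fin (n + 1) → Fin (n + 1) → SpT n → ℝ)
    (hF : ∀ μ ν z, F μ ν z = pd μ (A ν) z - pd ν (A μ) z)
    (j : Fin (n + 1) → SpT n → ℝ)
    (hj : ∀ μ z, j μ z = (φ z * conj (pd μ φ z)).im + ‖φ z‖ ^ 2 * A μ z)
    (hMaxwell : ∀ μ z,
      -pd 0 (F μ 0) z + ∑ k : Fin n, pd k.succ (F μ k.succ) z = j μ z) :
    ∀ (k l : Fin n) (z : SpT n),
      box (F k.succ 0) z
        = (nullQ 0 k.succ φ (fun w => conj (φ w)) z).im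
            + pd 0 (fun w => A k.succ w * ‖φ w‖ ^ 2) z
            - pd k.succ (fun w => A 0 w * ‖φ w‖ ^ 2) z
      ∧ box (F k.succ l.succ) z
        = (nullQ l.succ k.succ φ (fun w => conj (φ w)) z).im
            + pd l.succ (fun w => A k.succ w * ‖φ w‖ ^ 2) z
            - pd k.succ (fun w => A l.succ w * ‖φ w‖ ^ 2) z := by
  intro k l z
  obtain rfl : F = fieldStrength A := funext₂ fun μ ν => funext (hF μ ν)
  obtain rfl : j = current φ A := funext₂ hj
  have hA3 : ∀ ν, ContDiff ℝ 3 (A ν) := fun ν => (hA ν).of_le (WithTop.coe_le_coe.mpr le_top)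
  have hφ2 : ContDiff ℝ 2 φ := hφ.of_le (WithTop.coe_le_coe.mpr le_top)
  have key := box_fieldStrength_of_maxwell hA3 hφ2 fun μ => funext (hMaxwell μ)
  exact ⟨key k.succ 0 z, key k.succ l.succ z⟩

end
end
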